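/- Characterization of fixed points of the generalized power method map: Let α ≥ 0 and G ∈ O(d)^{⊗n}. Then the following are equivalent: (a) G is a fixed point of T_α, i.e. G ∈ T_α(G); (b) for each i ∈ [n], C̃_iᵀ G G_iᵀ = (C̃_iᵀ G (C̃_iᵀ G)ᵀ)^{1/2} (the positive semidefinite square root); (c) for each i ∈ [n], tr(C̃_iᵀ G G_iᵀ) = ‖C̃_iᵀ G‖_*; (d) tr(Gᵀ C̃ G) = Σ_{i=1}^n ‖C̃_iᵀ G‖_*. -/

import Mathlib

open Matrix BigOperators

noncomputable section
namespace GroupSync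

variable {n d : ℕ}

/-- Frobenius norm of a real matrix. -/
def frob {m k : Type*} [Fintype m] [Fintype k] (X : Matrix m k ℝ) : ℝ :=
  Real.sqrt (∑ i, ∑ j, (X i j) ^ 2)

/-- Spectral (operator) norm of a real matrix: the operator norm of the induced
linear map between Euclidean spaces. -/
def spec {m k : Type*} [Fintype m] [Fintype k] [DecidableEq k] (X : Matrix m k ℝ) : ℝ :=
  ‖LinearMap.toContinuousLinearMap (Matrix.toEuclideanLin X)‖

/-- Nuclear norm: trace of the positive semidefinite square root of `X * Xᵀ`
(i.e. the sum of the singular values of `X`). -/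
def nuclear {m k : Type*} [Fintype m] [Fintype k] [DecidableEq m] (X : Matrix m k ℝ) : ℝ :=
  ((Matrix.posSemidef_self_mul_conjTranspose X).1.eigenvectorUnitary.1 *
    Matrix.diagonal ((RCLike.ofReal : ℝ → ℝ) ∘ (√·) ∘ (Matrix.posSemidef_self_mul_conjTranspose X).1.eigenvalues) *
    (star (Matrix.posSemidef_self_mul_conjTranspose X).1.eigenvectorUnitary :
      Matrix m m ℝ)).trace

/-- The positive semidefinite square root of `X * Xᵀ`. -/
def psdSqrtMulT {m k : Type*} [Fintype m] [Fintype k] [DecidableEq m] (X : Matrix m k ℝ) :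
    Matrix m m ℝ :=
  (Matrix.posSemidef_self_mul_conjTranspose X).1.eigenvectorUnitary.1 *
    Matrix.diagonal ((RCLike.ofReal : ℝ → ℝ) ∘ (√·) ∘ (Matrix.posSemidef_self_mul_conjTranspose X).1.eigenvalues) *
    (star (Matrix.posSemidef_self_mul_conjTranspose X).1.eigenvectorUnitary : Matrix m m ℝ)

/-- Membership in the orthogonal group `O(d)`. -/
def IsOd (g : Matrix (Fin d) (Fin d) ℝ) : Prop :=
  gᵀ * g = 1 ∧ g * gᵀ = 1

/-- Membership in the special orthogonal group `SO(d)`. -/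
def IsSOd (g : Matrix (Fin d) (Fin d) ℝ) : Prop :=
  IsOd g ∧ g.det = 1

/-- The `i`-th `d × d` block of an `nd × d` matrix. -/
def blk (X : Matrix (Fin n × Fin d) (Fin d) ℝ) (i : Fin n) : Matrix (Fin d) (Fin d) ℝ :=
  Matrix.of fun a b => X (i, a) b

/-- Membership in `O(d)^{⊗n}`: every `d × d` block is orthogonal. -/
def OdN (G : Matrix (Fin n × Fin d) (Fin d) ℝ) : Prop :=
  ∀ i : Fin n, IsOd (blk G i)

/-- Membership in `SO(d)^{⊗n}`. -/
def SOdN (G : Matrix (Fin n × Fin d) (Fin d) ℝ) : Prop :=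
  ∀ i : Fin n, IsSOd (blk G i)

/-- The `i`-th block column (an `nd × d` matrix) of an `nd × nd` matrix. -/
def bcol (M : Matrix (Fin n × Fin d) (Fin n × Fin d) ℝ) (i : Fin n) :
    Matrix (Fin n × Fin d) (Fin d) ℝ :=
  Matrix.of fun p b => M p (i, b)

/-- The `ij`-th `d × d` block of an `nd × nd` matrix. -/
def dblk (M : Matrix (Fin n × Fin d) (Fin n × Fin d) ℝ) (i j : Fin n) :
    Matrix (Fin d) (Fin d) ℝ :=
  Matrix.of fun a b => M (i, a) (j, b)

/-- `G' ∈ T_α(G)` (where `Ct = C + α I`): `G' ∈ O(d)^{⊗n}` and each block `G'_i` is a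
nearest point of `C̃ᵢᵀ G` in `O(d)` w.r.t. the Frobenius norm. -/
def InT (Ct : Matrix (Fin n × Fin d) (Fin n × Fin d) ℝ)
    (G G' : Matrix (Fin n × Fin d) (Fin d) ℝ) : Prop :=
  OdN G' ∧ ∀ i : Fin n, ∀ X : Matrix (Fin d) (Fin d) ℝ, IsOd X →
    frob (blk G' i - (bcol Ct i)ᵀ * G) ≤ frob (X - (bcol Ct i)ᵀ * G)

/-- `G' ∈ ST_α(G)`: the `SO(d)` analogue of `InT`. -/
def InST (Ct : Matrix (Fin n × Fin d) (Fin n × Fin d) ℝ)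
    (G G' : Matrix (Fin n × Fin d) (Fin d) ℝ) : Prop :=
  SOdN G' ∧ ∀ i : Fin n, ∀ X : Matrix (Fin d) (Fin d) ℝ, IsSOd X →
    frob (blk G' i - (bcol Ct i)ᵀ * G) ≤ frob (X - (bcol Ct i)ᵀ * G)

/-- The quotient distance `d(X, Y) = min_{g ∈ O(d)} ‖X − Y g‖_F`. -/
def dOrth (X Y : Matrix (Fin n × Fin d) (Fin d) ℝ) : ℝ :=
  ⨅ g : {g : Matrix (Fin d) (Fin d) ℝ // IsOd g}, frob (X - Y * g.1)

/-- The objective function `f(G) = tr(Gᵀ C G)`. -/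
def obj (C : Matrix (Fin n × Fin d) (Fin n × Fin d) ℝ)
    (G : Matrix (Fin n × Fin d) (Fin d) ℝ) : ℝ :=
  Matrix.trace (Gᵀ * C * G)

/-- Hadamard (entrywise) product. -/
def had {m k : Type*} (X Y : Matrix m k ℝ) : Matrix m k ℝ :=
  Matrix.of fun p q => X p q * Y p q

/-- `W ⊗ (1_d 1_dᵀ)`, the Kronecker product of `W` with the all-ones `d × d` matrix. -/
def kron1 (W : Matrix (Fin n) (Fin n) ℝ) : Matrix (Fin n × Fin d) (Fin n × Fin d) ℝ :=
  Matrix.kroneckerMap (· * ·) W (Matrix.of fun (_ _ : Fin d) => (1 : ℝ))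

/-- The all-ones matrix `1_m 1_mᵀ`. -/
def onesMat (m : Type*) : Matrix m m ℝ :=
  Matrix.of fun _ _ => (1 : ℝ)

/-- `symblockdiag`: symmetrize the diagonal `d × d` blocks, zero out all other blocks. -/
def sbd (X : Matrix (Fin n × Fin d) (Fin n × Fin d) ℝ) :
    Matrix (Fin n × Fin d) (Fin n × Fin d) ℝ :=
  Matrix.of fun p q => if p.1 = q.1 then (X p q + X (p.1, q.2) (q.1, p.2)) / 2 else 0

/-- `S(G) = symblockdiag(C G Gᵀ) − C`. -/
def Smat (C : Matrix (Fin n × Fin d) (Fin n × Fin d) ℝ)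
    (G : Matrix (Fin n × Fin d) (Fin d) ℝ) : Matrix (Fin n × Fin d) (Fin n × Fin d) ℝ :=
  sbd (C * (G * Gᵀ)) - C

/-- `G` is a second-order critical point of (QP): `S(G) G = 0` and
`⟨H, S(G) H⟩ ≥ 0` for all tangent directions `H` (blockwise `Hᵢ Gᵢᵀ` skew-symmetric). -/
def IsSOC (C : Matrix (Fin n × Fin d) (Fin n × Fin d) ℝ)
    (G : Matrix (Fin n × Fin d) (Fin d) ℝ) : Prop :=
  Smat C G * G = 0 ∧
  ∀ H : Matrix (Fin n × Fin d) (Fin d) ℝ,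
    (∀ i : Fin n, (blk H i * (blk G i)ᵀ)ᵀ = -(blk H i * (blk G i)ᵀ)) →
    0 ≤ Matrix.trace (Hᵀ * (Smat C G * H))

/-- Smallest singular value of a square matrix, as the minimum of `‖M v‖` over
unit vectors `v`. -/
def sigmaMin (M : Matrix (Fin d) (Fin d) ℝ) : ℝ :=
  ⨅ v : {v : Fin d → ℝ // ∑ a, (v a) ^ 2 = 1}, Real.sqrt (∑ a, (M.mulVec v.1 a) ^ 2)

/-- The singular values of a square matrix: square roots of the eigenvalues of `Mᵀ M`. -/
def singVal (M : Matrix (Fin d) (Fin d) ℝ) (l : Fin d) : ℝ :=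
  Real.sqrt ((show (Mᵀ * M).IsHermitian from Matrix.isHermitian_conjTranspose_mul_self M).eigenvalues l)

/-- Smallest eigenvalue of a (symmetric) matrix, as the minimum Rayleigh quotient
over unit vectors. -/
def lambdaMin {m : Type*} [Fintype m] (M : Matrix m m ℝ) : ℝ :=
  ⨅ v : {v : m → ℝ // ∑ i, (v i) ^ 2 = 1}, v.1 ⬝ᵥ M.mulVec v.1

/-- `D_α(G)`: block diagonal of the psd square roots of `(C̃ᵢᵀ G)(C̃ᵢᵀ G)ᵀ`, minus `C̃`. -/
def Dmat (Ct : Matrix (Fin n × Fin d) (Fin n × Fin d) ℝ)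
    (G : Matrix (Fin n × Fin d) (Fin d) ℝ) : Matrix (Fin n × Fin d) (Fin n × Fin d) ℝ :=
  (Matrix.of fun p q =>
    if p.1 = q.1 then psdSqrtMulT ((bcol Ct p.1)ᵀ * G) p.2 q.2 else 0) - Ct

/-- The residual function `ρ_α(G) = ‖D_α(G) G‖_F`. -/
def rho (Ct : Matrix (Fin n × Fin d) (Fin n × Fin d) ℝ)
    (G : Matrix (Fin n × Fin d) (Fin d) ℝ) : ℝ :=
  frob (Dmat Ct G * G)

/-- Blockwise infinity norm: `‖X‖_∞ = max_i ‖X_i‖` (spectral norm of the blocks). -/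
def binf (X : Matrix (Fin n × Fin d) (Fin d) ℝ) : ℝ :=
  ⨆ i : Fin n, spec (blk X i)

/-! For `M = C̃ᵢᵀ G` and orthogonal `X`, `‖X - M‖_F² = d - 2 tr(Xᵀ M) + ‖M‖_F²`, so `Gᵢ` is a
nearest point of `M` iff it maximizes `tr(Xᵀ M)` over `O(d)`. In an eigenbasis of `(M Mᵀ)^{1/2}`
the rows of `M Xᵀ` are orthogonal with norms the singular values of `M`, hence
`tr(M Xᵀ) ≤ ‖M‖_*`, with equality only if `M Xᵀ = (M Mᵀ)^{1/2}`. Conversely, if `Gᵢ` is a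
maximizer then `B = M Gᵢᵀ` satisfies `tr(Rᵀ B) ≤ tr B` for all `R ∈ O(d)`; testing this against
plane rotations makes `B` symmetric and against reflections makes it positive semidefinite, so
`B = (B Bᵀ)^{1/2} = (M Mᵀ)^{1/2}`. Summing the blockwise inequalities `tr(M Gᵢᵀ) ≤ ‖M‖_*` gives
(c) ⇔ (d). -/

lemma trace_mul_mul_eq_of_mul_eq_one {m R : Type*} [Fintype m] [DecidableEq m] [CommSemiring R]
    {U V : Matrix m m R} (h : V * U = 1) (A : Matrix m m R) : (U * A * V).trace = A.trace := by
  rw [trace_mul_comm, ← Matrix.mul_assoc, h, Matrix.one_mul]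

section SquareRoot

open scoped MatrixOrder

variable {m k : Type*} [Fintype m] [Fintype k] [DecidableEq m]

lemma psdSqrtMulT_eq_cfcSqrt (X : Matrix m k ℝ) : psdSqrtMulT X = CFC.sqrt (X * Xᴴ) := by
  have hX := posSemidef_self_mul_conjTranspose X
  rw [CFC.sqrt_eq_real_sqrt _ (nonneg_iff_posSemidef.mpr hX), cfcₙ_eq_cfc, hX.1.cfc_eq]
  rfl

lemma psdSqrtMulT_congr {X Y : Matrix m k ℝ} (h : X * Xᴴ = Y * Yᴴ) :
    psdSqrtMulT X = psdSqrtMulT Y := by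
  rw [psdSqrtMulT_eq_cfcSqrt, psdSqrtMulT_eq_cfcSqrt, h]

lemma eq_psdSqrtMulT_of_posSemidef {B : Matrix m m ℝ} (hB : B.PosSemidef) :
    B = psdSqrtMulT B := by
  rw [psdSqrtMulT_eq_cfcSqrt, hB.1.eq, CFC.sqrt_mul_self B (nonneg_iff_posSemidef.mpr hB)]

lemma sum_sq_row_eq_of_mul_conjTranspose_eq_diagonal {N : Matrix m m ℝ} {μ : m → ℝ}
    (hN : N * Nᴴ = diagonal μ) (i : m) : ∑ j, N i j ^ 2 = μ i := by
  simpa [mul_apply, sq] using congrFun (congrFun hN i) i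

lemma diag_le_sqrt_of_mul_conjTranspose_eq_diagonal {N : Matrix m m ℝ} {μ : m → ℝ}
    (hN : N * Nᴴ = diagonal μ) (i : m) : N i i ≤ √(μ i) :=
  Real.le_sqrt_of_sq_le <| sum_sq_row_eq_of_mul_conjTranspose_eq_diagonal hN i ▸
    Finset.single_le_sum (fun j _ => sq_nonneg (N i j)) (Finset.mem_univ i)

lemma trace_le_sum_sqrt_of_mul_conjTranspose_eq_diagonal {N : Matrix m m ℝ} {μ : m → ℝ}
    (hN : N * Nᴴ = diagonal μ) : N.trace ≤ ∑ i, √(μ i) :=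
  Finset.sum_le_sum fun i _ => diag_le_sqrt_of_mul_conjTranspose_eq_diagonal hN i

lemma eq_diagonal_sqrt_of_trace_eq {N : Matrix m m ℝ} {μ : m → ℝ}
    (hN : N * Nᴴ = diagonal μ) (htr : N.trace = ∑ i, √(μ i)) :
    N = diagonal fun i => √(μ i) := by
  have hdiag : ∀ i, N i i = √(μ i) := fun i =>
    (Finset.sum_eq_sum_iff_of_le fun i _ =>
      diag_le_sqrt_of_mul_conjTranspose_eq_diagonal hN i).mp htr i (Finset.mem_univ i)
  ext i j
  rcases eq_or_ne i j with rfl | hij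
  · simp [hdiag]
  have hμ : 0 ≤ μ i := by
    rw [← sum_sq_row_eq_of_mul_conjTranspose_eq_diagonal hN i]; positivity
  have hoff : ∑ l ∈ Finset.univ.erase i, N i l ^ 2 = 0 := by
    have := Finset.add_sum_erase Finset.univ (fun l => N i l ^ 2) (Finset.mem_univ i)
    rw [sum_sq_row_eq_of_mul_conjTranspose_eq_diagonal hN i, hdiag, Real.sq_sqrt hμ] at this
    linarith
  have := (Finset.sum_eq_zero_iff_of_nonneg fun l _ => sq_nonneg (N i l)).mp hoff j
    (Finset.mem_erase.mpr ⟨hij.symm, Finset.mem_univ j⟩)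
  simpa [diagonal_apply_ne _ hij] using this

lemma exists_unitary_diagonalizing_psdSqrtMulT (A : Matrix m m ℝ) :
    ∃ U ∈ unitaryGroup m ℝ, ∃ μ : m → ℝ,
      (star U * A * U) * (star U * A * U)ᴴ = diagonal μ ∧
      psdSqrtMulT A = U * diagonal (fun i => √(μ i)) * star U := by
  set hA := (posSemidef_self_mul_conjTranspose A).1
  set U : Matrix m m ℝ := (hA.eigenvectorUnitary : Matrix m m ℝ)
  have hU : U * star U = 1 := Unitary.mul_star_self_of_mem hA.eigenvectorUnitary.2
  refine ⟨U, hA.eigenvectorUnitary.2, hA.eigenvalues, ?_, rfl⟩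
  have h := hA.conjStarAlgAut_star_eigenvectorUnitary
  simp only [Unitary.conjStarAlgAut_star_apply, RCLike.ofReal_real_eq_id, Function.id_comp] at h
  calc (star U * A * U) * (star U * A * U)ᴴ = star U * A * (U * star U) * Aᴴ * U := by
        simp only [← star_eq_conjTranspose, star_mul, star_star, Matrix.mul_assoc]
    _ = diagonal hA.eigenvalues := by
        rw [hU, Matrix.mul_one, ← h]; simp only [Matrix.mul_assoc]; rfl

lemma trace_le_trace_psdSqrtMulT (A : Matrix m m ℝ) : A.trace ≤ (psdSqrtMulT A).trace := by
  obtain ⟨U, hU, μ, hN, hS⟩ := exists_unitary_diagonalizing_psdSqrtMulT A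
  calc A.trace = (star U * A * U).trace :=
        (trace_mul_mul_eq_of_mul_eq_one (mem_unitaryGroup_iff.mp hU) A).symm
    _ ≤ ∑ i, √(μ i) := trace_le_sum_sqrt_of_mul_conjTranspose_eq_diagonal hN
    _ = (psdSqrtMulT A).trace := by
        rw [hS, trace_mul_mul_eq_of_mul_eq_one (mem_unitaryGroup_iff'.mp hU), trace_diagonal]

lemma eq_psdSqrtMulT_of_trace_eq {A : Matrix m m ℝ} (h : A.trace = (psdSqrtMulT A).trace) :
    A = psdSqrtMulT A := by
  obtain ⟨U, hU, μ, hN, hS⟩ := exists_unitary_diagonalizing_psdSqrtMulT A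
  have hUU : U * star U = 1 := mem_unitaryGroup_iff.mp hU
  have hNtr : (star U * A * U).trace = ∑ i, √(μ i) := by
    rw [trace_mul_mul_eq_of_mul_eq_one hUU, h, hS,
      trace_mul_mul_eq_of_mul_eq_one (mem_unitaryGroup_iff'.mp hU), trace_diagonal]
  calc A = U * (star U * A * U) * star U := by
        simp only [← Matrix.mul_assoc, hUU, Matrix.one_mul]
        rw [Matrix.mul_assoc, hUU, Matrix.mul_one]
    _ = psdSqrtMulT A := by rw [eq_diagonal_sqrt_of_trace_eq hN hNtr, hS]

end SquareRoot

lemma sum_sq_eq_trace_transpose_mul {m k R : Type*} [Fintype m] [Fintype k] [Semiring R]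
    (X : Matrix m k R) :
    ∑ i, ∑ j, X i j ^ 2 = (Xᵀ * X).trace := by
  simp only [trace, diag_apply, mul_apply, transpose_apply, sq]
  exact Finset.sum_comm

lemma frob_le_frob_iff {m k : Type*} [Fintype m] [Fintype k] {X Y : Matrix m k ℝ} :
    frob X ≤ frob Y ↔ (Xᵀ * X).trace ≤ (Yᵀ * Y).trace := by
  rw [frob, frob, Real.sqrt_le_sqrt_iff (by positivity), sum_sq_eq_trace_transpose_mul,
    sum_sq_eq_trace_transpose_mul]

lemma eq_zero_of_forall_sq_add_sq_eq_one {p q : ℝ}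
    (h : ∀ c s : ℝ, c ^ 2 + s ^ 2 = 1 → (c - 1) * p + s * q ≤ 0) : q = 0 := by
  set r := |p| + 1
  have hrp : p < r := by linarith [le_abs_self p]
  have hden : 0 < r ^ 2 + q ^ 2 := by positivity
  -- `(c, s) = (cos θ, sin θ)` with `tan (θ / 2) = q / r`
  have key := h ((r ^ 2 - q ^ 2) / (r ^ 2 + q ^ 2)) (2 * r * q / (r ^ 2 + q ^ 2))
    (by field_simp; ring)
  rw [show ((r ^ 2 - q ^ 2) / (r ^ 2 + q ^ 2) - 1) * p + 2 * r * q / (r ^ 2 + q ^ 2) * q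
      = 2 * q ^ 2 * (r - p) / (r ^ 2 + q ^ 2) by field_simp; ring,
    div_le_iff₀ hden, zero_mul] at key
  have hq : q ^ 2 ≤ 0 := by nlinarith
  exact pow_eq_zero_iff two_ne_zero |>.mp (le_antisymm hq (sq_nonneg q))

section Orthogonal

lemma IsOd.mul {X Y : Matrix (Fin d) (Fin d) ℝ} (hX : IsOd X) (hY : IsOd Y) : IsOd (X * Y) := by
  constructor
  · rw [transpose_mul, Matrix.mul_assoc, ← Matrix.mul_assoc Xᵀ, hX.1, Matrix.one_mul, hY.1]
  · rw [transpose_mul, Matrix.mul_assoc, ← Matrix.mul_assoc Y, hY.2, Matrix.one_mul, hX.2]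

lemma isOd_of_transpose_eq_self_of_mul_self_eq_one {R : Matrix (Fin d) (Fin d) ℝ}
    (hR : Rᵀ = R) (hRR : R * R = 1) : IsOd R := by
  rw [IsOd, hR]
  exact ⟨hRR, hRR⟩

lemma isOd_householder {v : Fin d → ℝ} (hv : v ≠ 0) :
    IsOd (1 - (2 / (v ⬝ᵥ v)) • vecMulVec v v) := by
  have hvv : v ⬝ᵥ v ≠ 0 := by simpa using hv
  refine isOd_of_transpose_eq_self_of_mul_self_eq_one (by simp [transpose_vecMulVec]) ?_
  simp only [sub_mul, mul_sub, Matrix.one_mul, Matrix.mul_one, Matrix.smul_mul, Matrix.mul_smul,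
    vecMulVec_mul_vecMulVec, vecMulVec_smul, smul_smul]
  rw [show 2 / (v ⬝ᵥ v) * (2 / (v ⬝ᵥ v) * v ⬝ᵥ v) = 2 / (v ⬝ᵥ v) + 2 / (v ⬝ᵥ v) by
    field_simp; ring]
  module

/-- The rotation by `(c, s) = (cos θ, sin θ)` in the plane onto which `P` projects, `K` being a
quarter turn of that plane. -/
lemma isOd_one_add_smul_add_smul {P K : Matrix (Fin d) (Fin d) ℝ} (hP : Pᵀ = P) (hK : Kᵀ = -K)
    (hPP : P * P = P) (hKK : K * K = -P) (hPK : P * K = K) (hKP : K * P = K) {c s : ℝ}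
    (hcs : c ^ 2 + s ^ 2 = 1) : IsOd (1 + (c - 1) • P + s • K) := by
  have hcoef : (c - 1) * (c - 1) + 2 * (c - 1) + s * s = 0 := by linear_combination hcs
  constructor <;>
  · simp only [transpose_add, transpose_smul, transpose_one, hP, hK, mul_add, add_mul, mul_neg,
      neg_mul, Matrix.one_mul, Matrix.mul_one, Matrix.smul_mul, Matrix.mul_smul, hPP, hKK, hPK,
      hKP, smul_smul, smul_neg]
    linear_combination (norm := module) hcoef • P

lemma IsOd.trace_transpose_mul_sub {X : Matrix (Fin d) (Fin d) ℝ} (hX : IsOd X)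
    (M : Matrix (Fin d) (Fin d) ℝ) :
    ((X - M)ᵀ * (X - M)).trace = d - 2 * (Xᵀ * M).trace + (Mᵀ * M).trace := by
  have hMX : (Mᵀ * X).trace = (Xᵀ * M).trace := by
    rw [← trace_transpose, transpose_mul, transpose_transpose]
  simp only [transpose_sub, sub_mul, mul_sub, trace_sub, hX.1, trace_one, Fintype.card_fin, hMX]
  ring

lemma frob_sub_le_frob_sub_iff {X Y : Matrix (Fin d) (Fin d) ℝ} (hX : IsOd X) (hY : IsOd Y)
    (M : Matrix (Fin d) (Fin d) ℝ) :
    frob (X - M) ≤ frob (Y - M) ↔ (Yᵀ * M).trace ≤ (Xᵀ * M).trace := by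
  rw [frob_le_frob_iff, hX.trace_transpose_mul_sub, hY.trace_transpose_mul_sub]
  constructor <;> intro h <;> linarith

end Orthogonal

section TraceMaximizer

variable {B : Matrix (Fin d) (Fin d) ℝ}

lemma posSemidef_of_forall_trace_le (hB : Bᵀ = B)
    (h : ∀ R, IsOd R → (Rᵀ * B).trace ≤ B.trace) : B.PosSemidef := by
  refine posSemidef_iff_dotProduct_mulVec.mpr ⟨hB, fun v => ?_⟩
  rcases eq_or_ne v 0 with rfl | hv
  · simp
  have hvv : 0 < v ⬝ᵥ v := by simpa using dotProduct_star_self_pos_iff.mpr hv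
  have hR := h _ (isOd_householder hv)
  rw [transpose_sub, transpose_one, transpose_smul, transpose_vecMulVec, sub_mul, Matrix.one_mul,
    trace_sub, Matrix.smul_mul, trace_smul, vecMulVec_mul, trace_vecMulVec,
    dotProduct_comm v (v ᵥ* B), ← dotProduct_mulVec, smul_eq_mul, sub_le_self_iff] at hR
  simpa using nonneg_of_mul_nonneg_right hR (by positivity)

lemma transpose_eq_of_forall_trace_le (h : ∀ R, IsOd R → (Rᵀ * B).trace ≤ B.trace) :
    Bᵀ = B := by
  ext a b
  rcases eq_or_ne a b with rfl | hab
  · rfl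
  set P : Matrix (Fin d) (Fin d) ℝ := single a a 1 + single b b 1
  set K : Matrix (Fin d) (Fin d) ℝ := single b a 1 - single a b 1
  have hrot : ∀ c s : ℝ, c ^ 2 + s ^ 2 = 1 → IsOd (1 + (c - 1) • P + s • K) := by
    intro c s hcs
    refine isOd_one_add_smul_add_smul ?_ ?_ ?_ ?_ ?_ ?_ hcs <;>
      simp [P, K, add_mul, mul_add, sub_mul, mul_sub, hab, hab.symm] <;> abel
  have hq : B b a - B a b = 0 := by
    refine eq_zero_of_forall_sq_add_sq_eq_one (p := B a a + B b b) fun c s hcs => ?_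
    have := h _ (hrot c s hcs)
    simp [P, K, add_mul, sub_mul, trace_single_mul] at this
    linarith
  exact sub_eq_zero.mp hq

lemma eq_psdSqrtMulT_of_forall_trace_le (h : ∀ R, IsOd R → (Rᵀ * B).trace ≤ B.trace) :
    B = psdSqrtMulT B :=
  eq_psdSqrtMulT_of_posSemidef <|
    posSemidef_of_forall_trace_le (transpose_eq_of_forall_trace_le h) h

end TraceMaximizer

section NearestPoint

def IsNearestOd (g M : Matrix (Fin d) (Fin d) ℝ) : Prop :=
  ∀ X, IsOd X → frob (g - M) ≤ frob (X - M)

variable {g M : Matrix (Fin d) (Fin d) ℝ}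

lemma psdSqrtMulT_mul_transpose {X : Matrix (Fin d) (Fin d) ℝ} (hX : IsOd X) :
    psdSqrtMulT (M * Xᵀ) = psdSqrtMulT M := by
  refine psdSqrtMulT_congr ?_
  rw [conjTranspose_eq_transpose_of_trivial, conjTranspose_eq_transpose_of_trivial, transpose_mul,
    transpose_transpose, Matrix.mul_assoc, ← Matrix.mul_assoc Xᵀ, hX.1, Matrix.one_mul]

lemma trace_mul_transpose_le_nuclear {X : Matrix (Fin d) (Fin d) ℝ} (hX : IsOd X) :
    (M * Xᵀ).trace ≤ nuclear M :=
  (trace_le_trace_psdSqrtMulT _).trans_eq <| by rw [psdSqrtMulT_mul_transpose hX]; rfl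

lemma isNearestOd_iff_forall_trace_le (hg : IsOd g) :
    IsNearestOd g M ↔ ∀ X, IsOd X → (Xᵀ * M).trace ≤ (gᵀ * M).trace :=
  forall₂_congr fun _ hX => frob_sub_le_frob_sub_iff hg hX M

lemma IsNearestOd.mul_transpose_eq_psdSqrtMulT (hg : IsOd g) (h : IsNearestOd g M) :
    M * gᵀ = psdSqrtMulT M := by
  refine (eq_psdSqrtMulT_of_forall_trace_le fun R hR => ?_).trans (psdSqrtMulT_mul_transpose hg)
  calc (Rᵀ * (M * gᵀ)).trace = ((R * g)ᵀ * M).trace := by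
        rw [← Matrix.mul_assoc, trace_mul_cycle, transpose_mul]
    _ ≤ (gᵀ * M).trace := (isNearestOd_iff_forall_trace_le hg).mp h _ (hR.mul hg)
    _ = (M * gᵀ).trace := trace_mul_comm _ _

lemma isNearestOd_of_trace_eq_nuclear (hg : IsOd g) (h : (M * gᵀ).trace = nuclear M) :
    IsNearestOd g M :=
  (isNearestOd_iff_forall_trace_le hg).mpr fun X hX =>
    calc (Xᵀ * M).trace = (M * Xᵀ).trace := trace_mul_comm _ _
      _ ≤ nuclear M := trace_mul_transpose_le_nuclear hX
      _ = (gᵀ * M).trace := h.symm.trans (trace_mul_comm _ _)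

lemma isNearestOd_iff_trace_eq_nuclear (hg : IsOd g) :
    IsNearestOd g M ↔ (M * gᵀ).trace = nuclear M :=
  ⟨fun h => by rw [h.mul_transpose_eq_psdSqrtMulT hg]; rfl, isNearestOd_of_trace_eq_nuclear hg⟩

lemma isNearestOd_iff_mul_transpose_eq_psdSqrtMulT (hg : IsOd g) :
    IsNearestOd g M ↔ M * gᵀ = psdSqrtMulT M :=
  ⟨IsNearestOd.mul_transpose_eq_psdSqrtMulT hg, fun h =>
    isNearestOd_of_trace_eq_nuclear hg (by rw [h]; rfl)⟩

end NearestPoint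

lemma inT_self_iff (Ct : Matrix (Fin n × Fin d) (Fin n × Fin d) ℝ)
    {G : Matrix (Fin n × Fin d) (Fin d) ℝ} (hG : OdN G) :
    InT Ct G G ↔ ∀ i, IsNearestOd (blk G i) ((bcol Ct i)ᵀ * G) :=
  and_iff_right hG

lemma trace_transpose_mul_mul_eq_sum (Ct : Matrix (Fin n × Fin d) (Fin n × Fin d) ℝ)
    (G : Matrix (Fin n × Fin d) (Fin d) ℝ) :
    (Gᵀ * Ct * G).trace = ∑ i, ((bcol Ct i)ᵀ * G * (blk G i)ᵀ).trace := by
  simp only [trace, diag_apply, mul_apply, transpose_apply, bcol, blk, of_apply, Finset.sum_mul]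
  rw [Finset.sum_comm, Fintype.sum_prod_type]
  refine Finset.sum_congr rfl fun i _ => Finset.sum_congr rfl fun a _ => ?_
  simp only [mul_comm (G _ _) (Ct _ _)]

theorem fixed_point_characterization_general {n d : ℕ}
    (Ct : Matrix (Fin n × Fin d) (Fin n × Fin d) ℝ)
    (G : Matrix (Fin n × Fin d) (Fin d) ℝ) (hG : OdN G) :
    (InT Ct G G ↔
      ∀ i : Fin n, (bcol Ct i)ᵀ * G * (blk G i)ᵀ = psdSqrtMulT ((bcol Ct i)ᵀ * G)) ∧
    (InT Ct G G ↔
      ∀ i : Fin n,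
        Matrix.trace ((bcol Ct i)ᵀ * G * (blk G i)ᵀ) = nuclear ((bcol Ct i)ᵀ * G)) ∧
    (InT Ct G G ↔
      Matrix.trace (Gᵀ * Ct * G) = ∑ i : Fin n, nuclear ((bcol Ct i)ᵀ * G)) := by
  have hc := (inT_self_iff Ct hG).trans <|
    forall_congr' fun i => isNearestOd_iff_trace_eq_nuclear (hG i)
  refine ⟨(inT_self_iff Ct hG).trans <|
    forall_congr' fun i => isNearestOd_iff_mul_transpose_eq_psdSqrtMulT (hG i), hc, ?_⟩
  rw [hc, trace_transpose_mul_mul_eq_sum, Finset.sum_eq_sum_iff_of_le fun i _ =>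
    trace_mul_transpose_le_nuclear (hG i)]
  simp

/-- Lemma: characterization of fixed points of the GPM map `T_α`.
For `α ≥ 0`, `C` symmetric and `G ∈ O(d)^{⊗n}`, with `C̃ = C + α I`, the following are
equivalent: (a) `G ∈ T_α(G)`; (b) `C̃ᵢᵀ G Gᵢᵀ = ((C̃ᵢᵀ G)(C̃ᵢᵀ G)ᵀ)^{1/2}` for all `i`;
(c) `tr(C̃ᵢᵀ G Gᵢᵀ) = ‖C̃ᵢᵀ G‖_*` for all `i`; (d) `tr(Gᵀ C̃ G) = Σᵢ ‖C̃ᵢᵀ G‖_*`. -/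
theorem fixed_point_characterization {n d : ℕ}
    (C : Matrix (Fin n × Fin d) (Fin n × Fin d) ℝ) (hCsymm : Cᵀ = C)
    (α : ℝ) (hα : 0 ≤ α)
    (Ct : Matrix (Fin n × Fin d) (Fin n × Fin d) ℝ)
    (hCt : Ct = C + α • (1 : Matrix (Fin n × Fin d) (Fin n × Fin d) ℝ))
    (G : Matrix (Fin n × Fin d) (Fin d) ℝ) (hG : OdN G) :
    (InT Ct G G ↔
      ∀ i : Fin n, (bcol Ct i)ᵀ * G * (blk G i)ᵀ = psdSqrtMulT ((bcol Ct i)ᵀ * G)) ∧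
    (InT Ct G G ↔
      ∀ i : Fin n,
        Matrix.trace ((bcol Ct i)ᵀ * G * (blk G i)ᵀ) = nuclear ((bcol Ct i)ᵀ * G)) ∧
    (InT Ct G G ↔
      Matrix.trace (Gᵀ * Ct * G) = ∑ i : Fin n, nuclear ((bcol Ct i)ᵀ * G)) :=
  fixed_point_characterization_general Ct G hG
end GroupSync
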